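/- Let c be an admissible coefficient function satisfying (Cubic values), (Separation) and (Symmetry), and assume a_1 ≥ 2. Let γ ∈ ℤ^{μ_A−2} be non-negative with |γ| = 3, of the form γ = γ_{1,1}e_{1,1}+γ_{2,1}e_{2,1}+γ_{3,1}e_{3,1} with γ_{1,1}·γ_{2,1}·γ_{3,1} = 0. Then c(γ,1) = 0. -/

import Mathlib

/- Common framework: Frobenius manifolds for orbifold projective lines ℙ¹_A,
   following Ishibashi–Shiraishi–Takahashi. -/

namespace FrobeniusUniqueness

/-- A point index `(i, j)` labelling a flat coordinate `t_{i,j}`. -/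
abbrev Pt : Type := Fin 3 × ℕ

/-- A non-negative element of `ℤ^{μ_A − 2}`: an exponent vector `α` with `α_{i,j} ∈ ℕ`. -/
abbrev Expv : Type := Pt →₀ ℕ

/-- The standard basis vector `e_{i,j}`. -/
noncomputable def e (i : Fin 3) (j : ℕ) : Expv := Finsupp.single (i, j) 1

/-- The length `|α|` of an exponent vector. -/
def len (α : Expv) : ℕ := α.sum fun _ n => n

/-- A point index `(i,j)` is valid if `1 ≤ j ≤ a_i − 1`. -/
def ValidPt (A : Fin 3 → ℕ) (p : Pt) : Prop := 1 ≤ p.2 ∧ p.2 ≤ A p.1 - 1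

/-- An exponent vector lies in `ℤ^{μ_A − 2}` iff it is supported on valid indices. -/
def Valid (A : Fin 3 → ℕ) (α : Expv) : Prop := ∀ p ∈ α.support, ValidPt A p

/-- The combinatorial factor `s_{a,b,c}`. -/
def sFactor (a b c : ℕ) : ℂ :=
  if a = b ∧ b = c then 6
  else if a ≠ b ∧ b ≠ c ∧ a ≠ c then 1
  else 2

/-- The index type for the flat coordinates `t_1`, `t_{i,j}`, `t_{μ_A}`. -/
inductive Idx : Type where
  | one : Idx
  | pt : Fin 3 → ℕ → Idx
  | mu : Idx
deriving DecidableEq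

/-- Validity of a flat coordinate index. -/
def ValidIdx (A : Fin 3 → ℕ) : Idx → Prop
  | .one => True
  | .pt i j => ValidPt A (i, j)
  | .mu => True

/-- The metric `η` in the frame `∂_1, ∂_{i,j}, ∂_{μ_A}`. -/
noncomputable def eta (A : Fin 3 → ℕ) : Idx → Idx → ℂ
  | .one, .mu => 1
  | .mu, .one => 1
  | .pt i j, .pt i' j' =>
      if i = i' ∧ j + j' = A i ∧ 1 ≤ j ∧ j ≤ A i - 1 then (A i : ℂ)⁻¹ else 0
  | _, _ => 0

/-- The point indices occurring in an `Idx`. -/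
def ptsOf : Idx → List Pt
  | .pt i j => [(i, j)]
  | _ => []

/-- The number of occurrences of `μ_A` in an `Idx`. -/
def muCount : Idx → ℕ
  | .mu => 1
  | _ => 0

/-- The factor produced when the monomial `t^{β + Σ_{p ∈ ps} e_p}` is differentiated by
`∏_{p ∈ ps} ∂_p`, leaving the monomial `t^β`. -/
noncomputable def dfac (β : Expv) : List Pt → ℕ
  | [] => 1
  | p :: ps =>
      ((β + ((ps.map fun q => (Finsupp.single q 1 : Expv)).sum) + Finsupp.single p 1 : Expv) p)
        * dfac β ps

/-- `der A c a b d β m` is the coefficient of `t^β · e^{m·t_{μ_A}}` in `∂_a ∂_b ∂_d F`, where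
`F = (1/2)t_1²t_{μ_A} + (1/2)t_1·Σ_{i,j}(1/a_i)t_{i,j}t_{i,a_i−j} + Σ_{α,m} c(α,m)t^α e^{m t_{μ_A}}`
is the potential of the coefficient function `c`.  In particular `∂_1∂_a∂_b F = η(∂_a,∂_b)`. -/
noncomputable def der (A : Fin 3 → ℕ) (c : Expv → ℕ → ℂ) (a b d : Idx) (β : Expv) (m : ℕ) : ℂ :=
  if a = .one then (if β = 0 ∧ m = 0 then eta A b d else 0)
  else if b = .one then (if β = 0 ∧ m = 0 then eta A a d else 0)
  else if d = .one then (if β = 0 ∧ m = 0 then eta A a b else 0)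
  else
    (m : ℂ) ^ (muCount a + muCount b + muCount d) *
      (dfac β (ptsOf a ++ ptsOf b ++ ptsOf d) : ℂ) *
      c (β + (((ptsOf a ++ ptsOf b ++ ptsOf d).map fun q => (Finsupp.single q 1 : Expv)).sum)) m

/-- The coefficient of `t^β · e^{m·t_{μ_A}}` in
`Σ_{σ,τ} ∂_a∂_b∂_σF · η^{στ} · ∂_τ∂_d∂_e F`, where `(η^{στ})` is the inverse matrix of
`(η_{στ})` (so the only nonzero entries are `η^{1,μ_A} = η^{μ_A,1} = 1` and
`η^{(i,j),(i,a_i−j)} = a_i`). -/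
noncomputable def quadTerm (A : Fin 3 → ℕ) (c : Expv → ℕ → ℂ) (a b d e' : Idx)
    (β : Expv) (m : ℕ) : ℂ :=
  ∑ x ∈ Finset.HasAntidiagonal.antidiagonal β, ∑ y ∈ Finset.HasAntidiagonal.antidiagonal m,
    (der A c a b .one x.1 y.1 * der A c .mu d e' x.2 y.2
     + der A c a b .mu x.1 y.1 * der A c .one d e' x.2 y.2
     + ∑ i : Fin 3, ∑ j ∈ Finset.Icc 1 (A i - 1),
         (A i : ℂ) * der A c a b (.pt i j) x.1 y.1 * der A c (.pt i (A i - j)) d e' x.2 y.2)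

/-- `χ_A = 1/a_1 + 1/a_2 + 1/a_3 − 1`. -/
noncomputable def chi (A : Fin 3 → ℕ) : ℚ := (A 0 : ℚ)⁻¹ + (A 1 : ℚ)⁻¹ + (A 2 : ℚ)⁻¹ - 1

/-- The degree of the monomial `t^α`: `Σ_{i,j} α_{i,j}·(a_i − j)/a_i`. -/
noncomputable def deg (A : Fin 3 → ℕ) (α : Expv) : ℚ :=
  α.sum fun p n => (n : ℚ) * (((A p.1 : ℚ) - (p.2 : ℚ)) / (A p.1 : ℚ))

/-- A coefficient function is admissible if it satisfies (Homogeneity) and the WDVV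
equations (coefficientwise, in the variables `t_{i,j}` and `e^{t_{μ_A}}`). -/
structure IsAdmissible (A : Fin 3 → ℕ) (c : Expv → ℕ → ℂ) : Prop where
  homog : ∀ α : Expv, Valid A α → ∀ m : ℕ, c α m ≠ 0 → deg A α + (m : ℚ) * chi A = 2
  wdvv : ∀ a b d e' : Idx, ValidIdx A a → ValidIdx A b → ValidIdx A d → ValidIdx A e' →
      ∀ β : Expv, Valid A β → ∀ m : ℕ,
        quadTerm A c a b d e' β m = quadTerm A c a d b e' β m

/-- (Cubic values). -/
def CubicValues (A : Fin 3 → ℕ) (c : Expv → ℕ → ℂ) : Prop :=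
  (∀ (i₁ i₂ i₃ : Fin 3) (j₁ j₂ j₃ : ℕ),
      ValidPt A (i₁, j₁) → ValidPt A (i₂, j₂) → ValidPt A (i₃, j₃) →
      ¬(i₁ = i₂ ∧ i₂ = i₃) → c (e i₁ j₁ + e i₂ j₂ + e i₃ j₃) 0 = 0) ∧
  (∀ (i : Fin 3) (j₁ j₂ j₃ : ℕ),
      ValidPt A (i, j₁) → ValidPt A (i, j₂) → ValidPt A (i, j₃) →
      sFactor j₁ j₂ j₃ * c (e i j₁ + e i j₂ + e i j₃) 0 =
        if j₁ + j₂ + j₃ = A i then (A i : ℂ)⁻¹ else 0)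

/-- (Normalization). -/
def Normalization (A : Fin 3 → ℕ) (c : Expv → ℕ → ℂ) : Prop :=
  (2 ≤ A 0 → c (e 0 1 + e 1 1 + e 2 1) 1 = 1) ∧
  (A 0 = 1 → A 0 < A 1 → c (e 1 1 + e 2 1) 1 = 1) ∧
  (A 0 = 1 → A 1 = 1 → A 1 < A 2 → c (e 2 1) 1 = 1) ∧
  (A 0 = 1 → A 1 = 1 → A 2 = 1 → c 0 1 = 1)

/-- (Separation). -/
def Separation (A : Fin 3 → ℕ) (c : Expv → ℕ → ℂ) : Prop :=
  ∀ γ : Expv, Valid A γ →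
    ∀ (i₁ i₂ : Fin 3) (j₁ j₂ : ℕ), i₁ ≠ i₂ → ValidPt A (i₁, j₁) → ValidPt A (i₂, j₂) →
      e i₁ j₁ + e i₂ j₂ ≤ γ → c γ 0 = 0

/-- The automorphism of `ℤ^{μ_A−2}` exchanging `e_{i₁,j}` and `e_{i₂,j}` for all `j`. -/
def swapExp (i₁ i₂ : Fin 3) (α : Expv) : Expv :=
  Finsupp.equivMapDomain ((Equiv.swap i₁ i₂).prodCongr (Equiv.refl ℕ)) α

/-- (Symmetry). -/
def Symmetry (A : Fin 3 → ℕ) (c : Expv → ℕ → ℂ) : Prop :=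
  ∀ i₁ i₂ : Fin 3, A i₁ = A i₂ → ∀ α : Expv, Valid A α → ∀ m : ℕ,
    c (swapExp i₁ i₂ α) m = c α m


/-! Since `γ₁₁ γ₂₁ γ₃₁ = 0`, the monomial `t^γ` avoids some leg `w`. Compare the coefficients of
`t^γ e^{t_{μ_A}}` in WDVV for `(∂_{w,1}, ∂_{w,a_w-1}, ∂_{μ_A}, ∂_{μ_A})`. Every term on the right
needs a factor `e^{t_{μ_A}}` from both of its third derivatives, so the right side vanishes. On the
left, the `η^{1,μ_A}` term gives `a_w⁻¹ c(γ,1)`; the terms through `∂_{i,j}` need the whole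
`e^{t_{μ_A}}` in `∂_{i,a_i-j}∂_{μ_A}∂_{μ_A}F`, so their other factor is
`c(x + e_{w,1} + e_{w,a_w-1} + e_{i,j}, 0)` with `x ≤ γ`, which vanishes by (Separation) or
(Cubic values). -/

variable {A : Fin 3 → ℕ} {c : Expv → ℕ → ℂ}

lemma Valid.add {α β : Expv} (hα : Valid A α) (hβ : Valid A β) : Valid A (α + β) := by
  intro p hp
  rcases Finset.mem_union.mp (Finsupp.support_add hp) with h | h
  exacts [hα p h, hβ p h]

lemma Valid.mono {α β : Expv} (hβ : Valid A β) (h : α ≤ β) : Valid A α :=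
  fun p hp => hβ p (Finsupp.support_mono h hp)

lemma Valid.nsmul {α : Expv} (hα : Valid A α) (n : ℕ) : Valid A (n • α) :=
  fun p hp => hα p (Finsupp.support_smul hp)

lemma valid_e {i : Fin 3} {j : ℕ} (h : ValidPt A (i, j)) : Valid A (e i j) := by
  intro p hp
  rwa [Finset.mem_singleton.mp (Finsupp.support_single_subset hp)]

lemma e_le_of_mem_support {α : Expv} {p : Pt} (hp : p ∈ α.support) : e p.1 p.2 ≤ α :=
  Finsupp.single_le_iff.mpr (Nat.one_le_iff_ne_zero.mpr (Finsupp.mem_support_iff.mp hp))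

lemma CubicValues.eq_zero_of_sum_ne (hcub : CubicValues A c) {i : Fin 3} {j₁ j₂ j₃ : ℕ}
    (h₁ : ValidPt A (i, j₁)) (h₂ : ValidPt A (i, j₂)) (h₃ : ValidPt A (i, j₃))
    (hsum : j₁ + j₂ + j₃ ≠ A i) : c (e i j₁ + e i j₂ + e i j₃) 0 = 0 := by
  have h := hcub.2 i j₁ j₂ j₃ h₁ h₂ h₃
  rw [if_neg hsum] at h
  refine (mul_eq_zero.mp h).resolve_left ?_
  unfold sFactor
  split_ifs <;> norm_num

lemma validPt_one_of_two_le {i : Fin 3} (h : 2 ≤ A i) : ValidPt A (i, 1) :=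
  ⟨le_rfl, Nat.le_sub_of_add_le h⟩

lemma validPt_sub_one_of_two_le {i : Fin 3} (h : 2 ≤ A i) : ValidPt A (i, A i - 1) :=
  ⟨Nat.le_sub_of_add_le h, le_rfl⟩

lemma eta_mu_right {a : Idx} (ha : a ≠ .one) : eta A a .mu = 0 := by
  cases a <;> first | exact absurd rfl ha | rfl

lemma der_pt_pt_one (i₁ i₂ : Fin 3) (j₁ j₂ : ℕ) (β : Expv) (m : ℕ) :
    der A c (.pt i₁ j₁) (.pt i₂ j₂) .one β m =
      if β = 0 ∧ m = 0 then eta A (.pt i₁ j₁) (.pt i₂ j₂) else 0 := by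
  simp [der]

lemma der_mu_mu_mu (β : Expv) (m : ℕ) : der A c .mu .mu .mu β m = (m : ℂ) ^ 3 * c β m := by
  simp [der, muCount, ptsOf, dfac]

lemma der_pt_pt_pt_eq_zero {i₁ i₂ i₃ : Fin 3} {j₁ j₂ j₃ : ℕ} {β : Expv} {m : ℕ}
    (h : c (β + e i₁ j₁ + e i₂ j₂ + e i₃ j₃) m = 0) :
    der A c (.pt i₁ j₁) (.pt i₂ j₂) (.pt i₃ j₃) β m = 0 := by
  simp only [e, add_assoc] at h
  simp [der, ptsOf, h]

lemma der_eq_zero_of_muCount {a b d : Idx} (ha : a ≠ .one) (hb : b ≠ .one) (hd : d ≠ .one)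
    (hmu : muCount a + muCount b + muCount d ≠ 0) (β : Expv) : der A c a b d β 0 = 0 := by
  simp [der, ha, hb, hd, zero_pow hmu]

lemma der_one_eq_zero_of_eta {b d : Idx} (h : eta A b d = 0) (β : Expv) (m : ℕ) :
    der A c .one b d β m = 0 := by
  simp [der, h]

lemma quadTerm_mu_mu_one_eq_zero {a d : Idx} (ha : a ≠ .one) (hd : d ≠ .one) (β : Expv) :
    quadTerm A c a .mu d .mu β 1 = 0 := by
  refine Finset.sum_eq_zero fun x _ => Finset.sum_eq_zero fun y hy => ?_
  have hy : y.1 = 0 ∨ y.2 = 0 := by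
    rw [Finset.HasAntidiagonal.mem_antidiagonal] at hy; omega
  have hleft : der A c a .mu .one x.1 y.1 = 0 := by simp [der, ha, eta_mu_right ha]
  rw [hleft, der_one_eq_zero_of_eta (eta_mu_right hd)]
  simp only [zero_mul, mul_zero, add_zero, zero_add]
  refine Finset.sum_eq_zero fun i _ => Finset.sum_eq_zero fun j _ => ?_
  rcases hy with hy | hy
  · rw [hy, der_eq_zero_of_muCount ha (by simp) (by simp) (by simp [muCount]), mul_zero, zero_mul]
  · rw [hy, der_eq_zero_of_muCount (by simp) hd (by simp) (by simp [muCount]), mul_zero]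

lemma quadTerm_pt_pt_mu_mu_one {i₁ i₂ : Fin 3} {j₁ j₂ : ℕ} {β : Expv}
    (hvanish : ∀ x ≤ β, ∀ i, ∀ j ∈ Finset.Icc 1 (A i - 1),
      c (x + e i₁ j₁ + e i₂ j₂ + e i j) 0 = 0) :
    quadTerm A c (.pt i₁ j₁) (.pt i₂ j₂) .mu .mu β 1 = eta A (.pt i₁ j₁) (.pt i₂ j₂) * c β 1 := by
  have hsummand : ∀ x ∈ Finset.HasAntidiagonal.antidiagonal β,
      ∀ y ∈ Finset.HasAntidiagonal.antidiagonal 1,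
      der A c (.pt i₁ j₁) (.pt i₂ j₂) .one x.1 y.1 * der A c .mu .mu .mu x.2 y.2
        + der A c (.pt i₁ j₁) (.pt i₂ j₂) .mu x.1 y.1 * der A c .one .mu .mu x.2 y.2
        + ∑ i : Fin 3, ∑ j ∈ Finset.Icc 1 (A i - 1), (A i : ℂ) *
            der A c (.pt i₁ j₁) (.pt i₂ j₂) (.pt i j) x.1 y.1 *
            der A c (.pt i (A i - j)) .mu .mu x.2 y.2
      = if x.1 = 0 ∧ y.1 = 0 then eta A (.pt i₁ j₁) (.pt i₂ j₂) * ((y.2 : ℂ) ^ 3 * c x.2 y.2)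
        else 0 := by
    intro x hx y hy
    rw [Finset.HasAntidiagonal.mem_antidiagonal] at hx hy
    have hcross : ∀ i, ∀ j ∈ Finset.Icc 1 (A i - 1), (A i : ℂ) *
        der A c (.pt i₁ j₁) (.pt i₂ j₂) (.pt i j) x.1 y.1 *
        der A c (.pt i (A i - j)) .mu .mu x.2 y.2 = 0 := by
      intro i j hj
      rcases (by omega : y.1 = 0 ∨ y.2 = 0) with hy1 | hy2
      · rw [hy1, der_pt_pt_pt_eq_zero (hvanish x.1 (hx ▸ le_self_add) i j hj), mul_zero,
          zero_mul]
      · rw [hy2, der_eq_zero_of_muCount (by simp) (by simp) (by simp) (by simp [muCount]),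
          mul_zero]
    rw [Finset.sum_eq_zero fun i _ => Finset.sum_eq_zero (hcross i),
      der_one_eq_zero_of_eta rfl, der_pt_pt_one, der_mu_mu_mu]
    split_ifs <;> simp
  rw [quadTerm, Finset.sum_congr rfl fun x hx => Finset.sum_congr rfl (hsummand x hx),
    Finset.sum_eq_single_of_mem ((0 : Expv), β) (by simp) ?_,
    Finset.sum_eq_single_of_mem ((0 : ℕ), 1) (by simp) ?_]
  · simp
  · rintro y hy hne
    refine if_neg fun ⟨_, hy1⟩ => hne (Prod.ext hy1 ?_)
    rw [Finset.HasAntidiagonal.mem_antidiagonal] at hy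
    omega
  · rintro x hx hne
    refine Finset.sum_eq_zero fun y _ => if_neg fun ⟨hx1, _⟩ => hne (Prod.ext hx1 ?_)
    rwa [Finset.HasAntidiagonal.mem_antidiagonal, hx1, zero_add] at hx

/-- A second leg in `x + e_{i,j}` triggers (Separation); otherwise (Cubic values) applies, since
`1 + (a_w - 1) + j ≠ a_w`. -/
lemma c_add_dual_pair_add_e_eq_zero (hcub : CubicValues A c) (hsep : Separation A c)
    {w : Fin 3} (hw : 2 ≤ A w) {x : Expv} (hx : Valid A x) (hxw : ∀ j, x (w, j) = 0)
    {i : Fin 3} {j : ℕ} (hij : ValidPt A (i, j)) :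
    c (x + e w 1 + e w (A w - 1) + e i j) 0 = 0 := by
  have hw₁ := validPt_one_of_two_le hw
  have hw₂ := validPt_sub_one_of_two_le hw
  have hvalid : Valid A (x + e w 1 + e w (A w - 1) + e i j) :=
    ((hx.add (valid_e hw₁)).add (valid_e hw₂)).add (valid_e hij)
  rcases x.support.eq_empty_or_nonempty with hx0 | ⟨p, hp⟩
  · obtain rfl := Finsupp.support_eq_empty.mp hx0
    rw [zero_add] at hvalid ⊢
    by_cases hiw : i = w
    · subst hiw
      have hj : 1 ≤ j := hij.1
      exact hcub.eq_zero_of_sum_ne hw₁ hw₂ hij (by omega)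
    · exact hsep _ hvalid w i 1 j (Ne.symm hiw) hw₁ hij (add_le_add_left le_self_add _)
  · have hpw : p.1 ≠ w := by
      rintro rfl
      exact Finsupp.mem_support_iff.mp hp (hxw p.2)
    refine hsep _ hvalid p.1 w p.2 1 hpw (hx p hp) hw₁ ?_
    calc e p.1 p.2 + e w 1 ≤ x + e w 1 := add_le_add_left (e_le_of_mem_support hp) _
      _ ≤ x + e w 1 + e w (A w - 1) + e i j := by rw [add_assoc _ _ (e i j)]; exact le_self_add

theorem IsAdmissible.c_one_eq_zero_of_avoids_leg (hadm : IsAdmissible A c)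
    (hcub : CubicValues A c) (hsep : Separation A c) {w : Fin 3} (hw : 2 ≤ A w) {γ : Expv}
    (hγ : Valid A γ) (hγw : ∀ j, γ (w, j) = 0) : c γ 1 = 0 := by
  have hwdvv := hadm.wdvv (.pt w 1) (.pt w (A w - 1)) .mu .mu (validPt_one_of_two_le hw)
    (validPt_sub_one_of_two_le hw) trivial trivial γ hγ 1
  have hvanish : ∀ x ≤ γ, ∀ i, ∀ j ∈ Finset.Icc 1 (A i - 1),
      c (x + e w 1 + e w (A w - 1) + e i j) 0 = 0 := fun x hx i j hj =>
    c_add_dual_pair_add_e_eq_zero hcub hsep hw (hγ.mono hx)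
      (fun j => Nat.le_zero.mp (hγw j ▸ hx (w, j))) (Finset.mem_Icc.mp hj)
  have heta : eta A (.pt w 1) (.pt w (A w - 1)) = (A w : ℂ)⁻¹ :=
    if_pos ⟨rfl, by omega, le_rfl, by omega⟩
  rw [quadTerm_pt_pt_mu_mu_one hvanish, quadTerm_mu_mu_one_eq_zero (by simp) (by simp), heta]
    at hwdvv
  exact (mul_eq_zero.mp hwdvv).resolve_left (inv_ne_zero (by exact_mod_cast (by omega : A w ≠ 0)))

theorem degree_one_coefficient_vanishing_corner_general (A : Fin 3 → ℕ) (hA01 : A 0 ≤ A 1) (hA12 : A 1 ≤ A 2)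
    (c : Expv → ℕ → ℂ) (hadm : IsAdmissible A c) (hcub : CubicValues A c)
    (hsep : Separation A c)
    (ha₁ : 2 ≤ A 0)
    (g₁ g₂ g₃ : ℕ) (hprod : g₁ * g₂ * g₃ = 0) :
    c (g₁ • e 0 1 + g₂ • e 1 1 + g₃ • e 2 1) 1 = 0 := by
  have hA : ∀ i, 2 ≤ A i := by
    intro i; fin_cases i <;> simp <;> omega
  have hvalid : ∀ i n, Valid A (n • e i 1) :=
    fun i n => (valid_e (validPt_one_of_two_le (hA i))).nsmul n
  obtain ⟨w, hw⟩ : ∃ w, ∀ j, (g₁ • e 0 1 + g₂ • e 1 1 + g₃ • e 2 1) (w, j) = 0 := by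
    rcases mul_eq_zero.mp hprod with h | h
    · rcases mul_eq_zero.mp h with h | h
      exacts [⟨0, by simp [e, h]⟩, ⟨1, by simp [e, h]⟩]
    · exact ⟨2, by simp [e, h]⟩
  exact hadm.c_one_eq_zero_of_avoids_leg hcub hsep (hA w)
    (((hvalid 0 g₁).add (hvalid 1 g₂)).add (hvalid 2 g₃)) hw

/-- Lemma (Case 2 of Proposition 3.8, for a₁ ≥ 2). -/
theorem degree_one_coefficient_vanishing_corner (A : Fin 3 → ℕ) (hA : ∀ i, 1 ≤ A i) (hA01 : A 0 ≤ A 1) (hA12 : A 1 ≤ A 2)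
    (c : Expv → ℕ → ℂ) (hadm : IsAdmissible A c) (hcub : CubicValues A c)
    (hsep : Separation A c) (hsym : Symmetry A c)
    (ha₁ : 2 ≤ A 0)
    (g₁ g₂ g₃ : ℕ) (hsum : g₁ + g₂ + g₃ = 3) (hprod : g₁ * g₂ * g₃ = 0) :
    c (g₁ • e 0 1 + g₂ • e 1 1 + g₃ • e 2 1) 1 = 0 :=
  degree_one_coefficient_vanishing_corner_general A hA01 hA12 c hadm hcub hsep ha₁ g₁ g₂ g₃ hprod

end FrobeniusUniqueness
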